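/- arXiv:1208.2757 — 3 statements merged into one kernel-verified Lean document; each statement's English description precedes it below -/
import Mathlib

section
/- For the (v₋,v₊)-gliders automaton F with v₋ < 0 ≤ v₊, for all j ∈ ℤ and all n ≥ 1: M_{F(a)}(j) < min over {j+1,...,j+n} of M_{F(a)} if and only if M_a(j-v₊) < min over {j+1-v₊,...,j+n-v₋} of M_a. -/
/-!
Let `G k` be the minimum of `M_a` on the window `[k - v₊, k - v₋]`. Since `M_a` moves by steps
in `{-1, 0, 1}`, the first case in the definition of `F` holds at `k` exactly when
`M_a (k - v₊) < G (k + 1)`, and then `G` rises by one; the second exactly when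
`M_a (k + 1 - v₋) < G k`, and then `G` falls by one; otherwise `G (k + 1) = G k`. Hence
`M_{F(a)} = G - G 0`. The windows of `j + 1, …, j + n` cover `[j + 1 - v₊, j + n - v₋]`, and
`G j < G (j + 1)` forces `G j = M_a (j - v₊)`.
-/

open scoped Classical

/-- The (v₋,v₊)-gliders automaton on alphabet {-1,0,+1} ⊆ ℤ. -/
noncomputable def glider (vm vp : ℤ) (a : ℤ → ℤ) : ℤ → ℤ := fun j =>
  if a (j - vp) = 1 ∧ (∀ N : ℤ, N ≤ -vm → 0 ≤ ∑ t ∈ Finset.Icc (-vp + 1) N, a (j + t)) then 1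
  else if a (j - vm) = -1 ∧ (∀ N : ℤ, -vp ≤ N → (∑ t ∈ Finset.Icc N (-vm - 1), a (j + t)) ≤ 0) then -1
  else 0

open Finset

section SlidingMin

variable {α : Type*} [LinearOrder α] (M : ℤ → α) {vm vp : ℤ} (hv : vm ≤ vp)

noncomputable def slidingMin (k : ℤ) : α :=
  (Icc (k - vp) (k - vm)).inf' (nonempty_Icc.2 (by omega)) M

variable {M}

theorem slidingMin_le {k m : ℤ} (hm : m ∈ Icc (k - vp) (k - vm)) : slidingMin M hv k ≤ M m :=
  inf'_le M hm

theorem lt_slidingMin_iff {c : α} {k : ℤ} :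
    c < slidingMin M hv k ↔ ∀ m ∈ Icc (k - vp) (k - vm), c < M m :=
  lt_inf'_iff _

theorem min_le_slidingMin (k : ℤ) :
    min (M (k - vp)) (slidingMin M hv (k + 1)) ≤ slidingMin M hv k := by
  refine le_inf' _ _ fun m hm => ?_
  rw [mem_Icc] at hm
  rcases hm.1.eq_or_lt with rfl | hlt
  · exact min_le_left _ _
  · exact (min_le_right _ _).trans (slidingMin_le hv (mem_Icc.2 ⟨by omega, by omega⟩))

theorem min_le_slidingMin_add_one (k : ℤ) :
    min (slidingMin M hv k) (M (k + 1 - vm)) ≤ slidingMin M hv (k + 1) := by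
  refine le_inf' _ _ fun m hm => ?_
  rw [mem_Icc] at hm
  rcases hm.2.eq_or_lt with rfl | hlt
  · exact min_le_right _ _
  · exact (min_le_left _ _).trans (slidingMin_le hv (mem_Icc.2 ⟨by omega, by omega⟩))

theorem forall_lt_slidingMin_iff {c : α} {j r : ℤ} (hr : j + 1 ≤ r) :
    (∀ i ∈ Icc (j + 1) r, c < slidingMin M hv i) ↔
      ∀ m ∈ Icc (j + 1 - vp) (r - vm), c < M m := by
  simp only [lt_slidingMin_iff, mem_Icc]
  constructor
  · intro h m hm
    exact h (max (j + 1) (m + vm)) ⟨le_max_left _ _, by omega⟩ m ⟨by omega, by omega⟩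
  · intro h i hi m hm
    exact h m ⟨by omega, by omega⟩

theorem slidingMin_eq_of_lt_slidingMin_add_one {j : ℤ}
    (h : slidingMin M hv j < slidingMin M hv (j + 1)) : slidingMin M hv j = M (j - vp) := by
  refine le_antisymm (slidingMin_le hv (mem_Icc.2 ⟨le_rfl, by omega⟩)) ?_
  have := min_le_slidingMin hv (M := M) j
  rw [min_le_iff] at this
  exact this.resolve_right (not_le.2 h)

theorem forall_slidingMin_lt_iff {j r : ℤ} (hr : j + 1 ≤ r) :
    (∀ i ∈ Icc (j + 1) r, slidingMin M hv j < slidingMin M hv i) ↔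
      ∀ m ∈ Icc (j + 1 - vp) (r - vm), M (j - vp) < M m := by
  constructor
  · intro h
    rw [← slidingMin_eq_of_lt_slidingMin_add_one hv (h _ (mem_Icc.2 ⟨le_rfl, hr⟩))]
    exact (forall_lt_slidingMin_iff hv hr).1 h
  · intro h i hi
    exact (slidingMin_le hv (mem_Icc.2 ⟨le_rfl, by omega⟩)).trans_lt
      ((forall_lt_slidingMin_iff hv hr).2 h i hi)

end SlidingMin

section Glider

variable {a M : ℤ → ℤ} {vm vp : ℤ}

theorem sum_Icc_add_left_eq_sub (hM : ∀ k, M (k + 1) = M k + a k) (k : ℤ) {l r : ℤ}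
    (h : l ≤ r + 1) : ∑ t ∈ Icc l r, a (k + t) = M (k + (r + 1)) - M (k + l) := by
  rw [← Ico_add_one_right_eq_Icc]
  generalize r + 1 = s at h ⊢
  induction s, h using Int.leInduction with
  | base => simp
  | succ s hs ih =>
    rw [← insert_Ico_right_eq_Ico_add_one hs, sum_insert (by simp), ih, ← add_assoc, hM]
    ring

theorem apply_add_one_sub_eq (hM : ∀ k, M (k + 1) = M k + a k) (k c : ℤ) :
    M (k + 1 - c) = M (k - c) + a (k - c) := by
  rw [← hM, add_sub_right_comm]

theorem glider_eq_one_condition_iff (hv : vm ≤ vp) (ha : ∀ k, a k ≤ 1)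
    (hM : ∀ k, M (k + 1) = M k + a k) (k : ℤ) :
    (a (k - vp) = 1 ∧ ∀ N : ℤ, N ≤ -vm → 0 ≤ ∑ t ∈ Icc (-vp + 1) N, a (k + t)) ↔
      ∀ m ∈ Icc (k + 1 - vp) (k + 1 - vm), M (k - vp) < M m := by
  have hsum : ∀ N, -vp ≤ N →
      ∑ t ∈ Icc (-vp + 1) N, a (k + t) = M (k + (N + 1)) - M (k + 1 - vp) := fun N hN => by
    rw [sum_Icc_add_left_eq_sub hM k (by omega), show k + (-vp + 1) = k + 1 - vp by ring]
  have hstep : M (k + 1 - vp) = M (k - vp) + a (k - vp) := apply_add_one_sub_eq hM k _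
  constructor
  · rintro ⟨hone, hnonneg⟩ m hm
    obtain ⟨N, rfl⟩ : ∃ N, m = k + (N + 1) := ⟨m - k - 1, by ring⟩
    rw [mem_Icc] at hm
    have := hnonneg N (by omega)
    rw [hsum N (by omega)] at this
    omega
  · intro h
    have hone : a (k - vp) = 1 := by
      have := h (k + 1 - vp) (mem_Icc.2 ⟨le_rfl, by omega⟩)
      have := ha (k - vp)
      omega
    refine ⟨hone, fun N hN => ?_⟩
    rcases lt_or_ge N (-vp) with hlt | hge
    · rw [Icc_eq_empty (by omega), sum_empty]
    · have := h (k + (N + 1)) (mem_Icc.2 ⟨by omega, by omega⟩)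
      rw [hsum N hge]
      omega

theorem glider_eq_neg_one_condition_iff (hv : vm ≤ vp) (ha : ∀ k, -1 ≤ a k)
    (hM : ∀ k, M (k + 1) = M k + a k) (k : ℤ) :
    (a (k - vm) = -1 ∧ ∀ N : ℤ, -vp ≤ N → ∑ t ∈ Icc N (-vm - 1), a (k + t) ≤ 0) ↔
      ∀ m ∈ Icc (k - vp) (k - vm), M (k + 1 - vm) < M m := by
  have hsum : ∀ N, N ≤ -vm →
      ∑ t ∈ Icc N (-vm - 1), a (k + t) = M (k - vm) - M (k + N) := fun N hN => by
    rw [sum_Icc_add_left_eq_sub hM k (by omega), show k + (-vm - 1 + 1) = k - vm by ring]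
  have hstep : M (k + 1 - vm) = M (k - vm) + a (k - vm) := apply_add_one_sub_eq hM k _
  constructor
  · rintro ⟨hone, hnonpos⟩ m hm
    rw [mem_Icc] at hm
    rcases hm.2.eq_or_lt with rfl | hlt
    · omega
    obtain ⟨N, rfl⟩ : ∃ N, m = k + N := ⟨m - k, by ring⟩
    have := hnonpos N (by omega)
    rw [hsum N (by omega)] at this
    omega
  · intro h
    have hone : a (k - vm) = -1 := by
      have := h (k - vm) (mem_Icc.2 ⟨by omega, le_rfl⟩)
      have := ha (k - vm)
      omega
    refine ⟨hone, fun N hN => ?_⟩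
    rcases le_or_gt (-vm) N with hle | hgt
    · rw [Icc_eq_empty (by omega), sum_empty]
    · have := h (k + N) (mem_Icc.2 ⟨by omega, by omega⟩)
      rw [hsum N hgt.le]
      omega

theorem glider_eq_slidingMin_sub (hv : vm ≤ vp) (ha : ∀ k, |a k| ≤ 1)
    (hM : ∀ k, M (k + 1) = M k + a k) (k : ℤ) :
    glider vm vp a k = slidingMin M hv (k + 1) - slidingMin M hv k := by
  have hle := min_le_slidingMin hv (M := M) k
  have hle' := min_le_slidingMin_add_one hv (M := M) k
  have h₁ := slidingMin_le hv (M := M) (mem_Icc.2 ⟨le_refl (k - vp), by omega⟩)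
  have h₂ := slidingMin_le hv (M := M) (mem_Icc.2 ⟨by omega, le_refl (k - vm)⟩)
  have h₃ := slidingMin_le hv (M := M) (mem_Icc.2 ⟨le_refl (k + 1 - vp), by omega⟩)
  have h₄ := slidingMin_le hv (M := M) (mem_Icc.2 ⟨by omega, le_refl (k + 1 - vm)⟩)
  have hstep : M (k + 1 - vp) = M (k - vp) + a (k - vp) := apply_add_one_sub_eq hM k _
  have hstep' : M (k + 1 - vm) = M (k - vm) + a (k - vm) := apply_add_one_sub_eq hM k _
  have ha₁ := abs_le.1 (ha (k - vp))
  have ha₂ := abs_le.1 (ha (k - vm))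
  simp only [glider, glider_eq_one_condition_iff hv (fun k => (abs_le.1 (ha k)).2) hM,
    glider_eq_neg_one_condition_iff hv (fun k => (abs_le.1 (ha k)).1) hM, ← lt_slidingMin_iff hv]
  split_ifs <;> omega

end Glider

theorem eq_sub_apply_zero_of_increments_eq {G : Type*} [AddCommGroup G] {f g : ℤ → G}
    (hf0 : f 0 = 0) (hf : ∀ k, f (k + 1) = f k + (g (k + 1) - g k)) (k : ℤ) :
    f k = g k - g 0 := by
  have hper : Function.Periodic (f - g) 1 := fun x => by
    simp only [Pi.sub_apply, hf]
    abel
  have := hper.int_mul_eq k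
  rw [Int.cast_id, mul_one, Pi.sub_apply, Pi.sub_apply, hf0, zero_sub, sub_eq_iff_eq_add] at this
  rw [this, neg_add_eq_sub]

theorem stmt1_general (vm vp : ℤ) (hvm : vm < 0) (hvp : 0 ≤ vp)
    (a : ℤ → ℤ) (ha : ∀ k, a k = -1 ∨ a k = 0 ∨ a k = 1)
    (M MF : ℤ → ℤ) (hM : ∀ k, M (k + 1) = M k + a k)
    (hMF0 : MF 0 = 0) (hMF : ∀ k, MF (k + 1) = MF k + glider vm vp a k)
    (j : ℤ) (n : ℕ) (hn : 1 ≤ n) :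
    (∀ i ∈ Finset.Icc (j + 1) (j + n), MF j < MF i) ↔
      (∀ i ∈ Finset.Icc (j + 1 - vp) (j + n - vm), M (j - vp) < M i) := by
  have hv : vm ≤ vp := by omega
  have ha_abs : ∀ k, |a k| ≤ 1 := fun k => by rcases ha k with h | h | h <;> simp [h]
  have hMF_eq : ∀ k, MF k = slidingMin M hv k - slidingMin M hv 0 :=
    eq_sub_apply_zero_of_increments_eq hMF0 fun k => by
      rw [hMF, glider_eq_slidingMin_sub hv ha_abs hM]
  simp only [hMF_eq, sub_lt_sub_iff_right]
  exact forall_slidingMin_lt_iff hv (by omega)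

theorem stmt1 (vm vp : ℤ) (hvm : vm < 0) (hvp : 0 ≤ vp)
    (a : ℤ → ℤ) (ha : ∀ k, a k = -1 ∨ a k = 0 ∨ a k = 1)
    (M MF : ℤ → ℤ) (hM0 : M 0 = 0) (hM : ∀ k, M (k + 1) = M k + a k)
    (hMF0 : MF 0 = 0) (hMF : ∀ k, MF (k + 1) = MF k + glider vm vp a k)
    (j : ℤ) (n : ℕ) (hn : 1 ≤ n) :
    (∀ i ∈ Finset.Icc (j + 1) (j + n), MF j < MF i) ↔
      (∀ i ∈ Finset.Icc (j + 1 - vp) (j + n - vm), M (j - vp) < M i) :=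
  stmt1_general vm vp hvm hvp a ha M MF hM hMF0 hMF j n hn
end

section
/- For the (v₋,v₊)-gliders automaton F with v₋ < 0 ≤ v₊, for all j ∈ ℤ and all k ≥ 0: F^k(a)_j = -1 if and only if M_a(j - v₋k + 1) < min over {j - v₊k, ..., j - v₋k} of M_a. -/
open scoped Classical

/-!
Write `W_k i` for the minimum of `M` on the window `[i - v₊k, i - v₋k]`. The key fact is that
`W_k` is again a partial sum function, namely that of `F^k(a)`. For `k = 1` this is a
comparison of two consecutive windows: the minimum rises by one exactly when the point leaving
the window lies strictly below the new window, which is the `+1` rule of `F`, and drops by one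
exactly when the entering point lies strictly below the old window, which is the `-1` rule.
Iterating uses that a minimum over windows of minima is the minimum over the combined window.
Finally `F^k(a)_j = -1` means `W_k (j + 1) < W_k j`, i.e. the point `j - v₋k + 1` entering the
window is strictly below the whole previous window.
-/

open Finset

section PartialSums

variable {a M : ℤ → ℤ}

lemma sum_Ico_eq_sub (hM : ∀ k, M (k + 1) = M k + a k) {lo hi : ℤ} (h : lo ≤ hi) :
    ∑ t ∈ Ico lo hi, a t = M hi - M lo := by
  induction hi, h using Int.leInduction with
  | base => simp
  | succ n hn ih =>
    rw [← insert_Ico_right_eq_Ico_add_one hn, sum_insert (by simp), ih, hM]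
    ring

lemma sum_Icc_add_eq_sub (hM : ∀ k, M (k + 1) = M k + a k) (i : ℤ) {lo hi : ℤ}
    (h : lo ≤ hi + 1) : ∑ t ∈ Icc lo hi, a (i + t) = M (i + hi + 1) - M (i + lo) := by
  rw [← Ico_add_one_right_eq_Icc,
    sum_Ico_eq_sub (M := fun t => M (i + t)) (fun t => by rw [← add_assoc, hM]) h, add_assoc]

end PartialSums

-- junk value `0` on an empty window
noncomputable def windowMin (M : ℤ → ℤ) (lo hi : ℤ) : ℤ :=
  if h : lo ≤ hi then (Icc lo hi).inf' (nonempty_Icc.2 h) M else 0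

section WindowMin

variable (M : ℤ → ℤ) {lo hi : ℤ}

lemma windowMin_le {m : ℤ} (hm : m ∈ Icc lo hi) : windowMin M lo hi ≤ M m := by
  have h : lo ≤ hi := (mem_Icc.1 hm).1.trans (mem_Icc.1 hm).2
  rw [windowMin, dif_pos h]
  exact inf'_le M hm

lemma le_windowMin (h : lo ≤ hi) {c : ℤ} (hc : ∀ m ∈ Icc lo hi, c ≤ M m) :
    c ≤ windowMin M lo hi := by
  rw [windowMin, dif_pos h]
  exact le_inf' _ M hc

lemma exists_eq_windowMin (h : lo ≤ hi) : ∃ m ∈ Icc lo hi, M m = windowMin M lo hi := by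
  rw [windowMin, dif_pos h]
  obtain ⟨m, hm, he⟩ := exists_mem_eq_inf' (nonempty_Icc.2 h) M
  exact ⟨m, hm, he.symm⟩

lemma windowMin_self (i : ℤ) : windowMin M i i = M i :=
  le_antisymm (windowMin_le M (by simp)) (le_windowMin M le_rfl (by simp))

lemma windowMin_succ_lt_iff (h : lo ≤ hi) :
    windowMin M (lo + 1) (hi + 1) < windowMin M lo hi ↔
      ∀ m ∈ Icc lo hi, M (hi + 1) < M m := by
  constructor
  · intro hlt
    obtain ⟨m₀, hm₀, hmin⟩ := exists_eq_windowMin M (show lo + 1 ≤ hi + 1 by omega)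
    have hm₀_eq : m₀ = hi + 1 := by
      by_contra hne
      have := windowMin_le M (show m₀ ∈ Icc lo hi by rw [mem_Icc] at hm₀ ⊢; omega)
      omega
    subst hm₀_eq
    exact fun m hm => hmin ▸ hlt.trans_le (windowMin_le M hm)
  · intro hnew
    obtain ⟨m₀, hm₀, hmin⟩ := exists_eq_windowMin M h
    calc windowMin M (lo + 1) (hi + 1) ≤ M (hi + 1) := windowMin_le M (by simp [h])
      _ < M m₀ := hnew m₀ hm₀
      _ = windowMin M lo hi := hmin

lemma windowMin_lt_succ_iff (h : lo ≤ hi) :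
    windowMin M lo hi < windowMin M (lo + 1) (hi + 1) ↔
      ∀ m ∈ Icc (lo + 1) (hi + 1), M lo < M m := by
  constructor
  · intro hlt
    obtain ⟨m₀, hm₀, hmin⟩ := exists_eq_windowMin M h
    have hm₀_eq : m₀ = lo := by
      by_contra hne
      have := windowMin_le M
        (show m₀ ∈ Icc (lo + 1) (hi + 1) by rw [mem_Icc] at hm₀ ⊢; omega)
      omega
    subst hm₀_eq
    exact fun m hm => hmin ▸ hlt.trans_le (windowMin_le M hm)
  · intro hold
    obtain ⟨m₀, hm₀, hmin⟩ := exists_eq_windowMin M (show lo + 1 ≤ hi + 1 by omega)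
    calc windowMin M lo hi ≤ M lo := windowMin_le M (by simp [h])
      _ < M m₀ := hold m₀ hm₀
      _ = windowMin M (lo + 1) (hi + 1) := hmin

lemma abs_windowMin_succ_sub_le (hstep : ∀ m, |M (m + 1) - M m| ≤ 1) (h : lo ≤ hi) :
    |windowMin M (lo + 1) (hi + 1) - windowMin M lo hi| ≤ 1 := by
  rw [abs_le]
  constructor
  · suffices windowMin M lo hi - 1 ≤ windowMin M (lo + 1) (hi + 1) by linarith
    refine le_windowMin M (by omega) fun m hm => ?_
    have hprev := windowMin_le M (show m - 1 ∈ Icc lo hi by rw [mem_Icc] at hm ⊢; omega)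
    have hjump := (abs_le.1 (hstep (m - 1))).1
    rw [sub_add_cancel] at hjump
    linarith
  · suffices windowMin M (lo + 1) (hi + 1) - 1 ≤ windowMin M lo hi by linarith
    refine le_windowMin M h fun m hm => ?_
    have hnext :=
      windowMin_le M (show m + 1 ∈ Icc (lo + 1) (hi + 1) by rw [mem_Icc] at hm ⊢; omega)
    have hjump := (abs_le.1 (hstep m)).2
    linarith

lemma windowMin_windowMin {p q p' q' : ℤ} (h : q ≤ p) (h' : q' ≤ p') (i : ℤ) :
    windowMin (fun m => windowMin M (m - p) (m - q)) (i - p') (i - q') =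
      windowMin M (i - (p + p')) (i - (q + q')) := by
  apply le_antisymm
  · refine le_windowMin M (by omega) fun n hn => ?_
    rw [mem_Icc] at hn
    -- `n` lies in the inner window of this `m`
    set m := max (i - p') (n + q)
    calc _ ≤ windowMin M (m - p) (m - q) :=
          windowMin_le (fun m => windowMin M (m - p) (m - q)) (by rw [mem_Icc]; omega)
      _ ≤ M n := windowMin_le M (by rw [mem_Icc]; omega)
  · refine le_windowMin _ (by omega) fun m hm => le_windowMin M (by omega) fun n hn => ?_
    exact windowMin_le M (by rw [mem_Icc] at hm hn ⊢; omega)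

end WindowMin

lemma eq_neg_one_iff_succ_lt {a M : ℤ → ℤ} (ha : ∀ k, a k = -1 ∨ a k = 0 ∨ a k = 1)
    (hM : ∀ k, M (k + 1) = M k + a k) (j : ℤ) : a j = -1 ↔ M (j + 1) < M j := by
  rw [hM]
  rcases ha j with h | h | h <;> rw [h] <;> omega

lemma glider_values (vm vp : ℤ) (a : ℤ → ℤ) (i : ℤ) :
    glider vm vp a i = -1 ∨ glider vm vp a i = 0 ∨ glider vm vp a i = 1 := by
  simp only [glider]
  split_ifs <;> simp

section Glider

variable {vm vp : ℤ} {a M : ℤ → ℤ}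

lemma iterate_glider_values (ha : ∀ k, a k = -1 ∨ a k = 0 ∨ a k = 1) (k : ℕ) (i : ℤ) :
    (glider vm vp)^[k] a i = -1 ∨ (glider vm vp)^[k] a i = 0 ∨ (glider vm vp)^[k] a i = 1 := by
  cases k with
  | zero => exact ha i
  | succ k => rw [Function.iterate_succ_apply']; exact glider_values vm vp _ i

variable (ha : ∀ k, a k = -1 ∨ a k = 0 ∨ a k = 1) (hM : ∀ k, M (k + 1) = M k + a k)
include ha hM

lemma glider_plus_rule_iff (hv : vm ≤ vp) (i : ℤ) :
    (a (i - vp) = 1 ∧ ∀ N : ℤ, N ≤ -vm → 0 ≤ ∑ t ∈ Icc (-vp + 1) N, a (i + t)) ↔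
      ∀ m ∈ Icc (i - vp + 1) (i - vm + 1), M (i - vp) < M m := by
  have hleave := hM (i - vp)
  constructor
  · rintro ⟨hone, hsum⟩ m hm
    rw [mem_Icc] at hm
    have h := hsum (m - i - 1) (by omega)
    rw [sum_Icc_add_eq_sub hM i (by omega), show i + (m - i - 1) + 1 = m by ring,
      show i + (-vp + 1) = i - vp + 1 by ring] at h
    omega
  · intro h
    have hnext := h (i - vp + 1) (by rw [mem_Icc]; omega)
    have hone : a (i - vp) = 1 := by rcases ha (i - vp) with h' | h' | h' <;> omega
    refine ⟨hone, fun N hN => ?_⟩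
    rcases lt_or_ge N (-vp) with hN' | hN'
    · rw [Icc_eq_empty (by omega), sum_empty]
    · rw [sum_Icc_add_eq_sub hM i (by omega), show i + (-vp + 1) = i - vp + 1 by ring]
      have := h (i + N + 1) (by rw [mem_Icc]; omega)
      omega

lemma glider_minus_rule_iff (hv : vm ≤ vp) (i : ℤ) :
    (a (i - vm) = -1 ∧ ∀ N : ℤ, -vp ≤ N → ∑ t ∈ Icc N (-vm - 1), a (i + t) ≤ 0) ↔
      ∀ m ∈ Icc (i - vp) (i - vm), M (i - vm + 1) < M m := by
  have henter := hM (i - vm)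
  constructor
  · rintro ⟨hneg, hsum⟩ m hm
    rw [mem_Icc] at hm
    have h := hsum (m - i) (by omega)
    rw [sum_Icc_add_eq_sub hM i (by omega), show i + (-vm - 1) + 1 = i - vm by ring,
      show i + (m - i) = m by ring] at h
    omega
  · intro h
    have hprev := h (i - vm) (by rw [mem_Icc]; omega)
    have hneg : a (i - vm) = -1 := by rcases ha (i - vm) with h' | h' | h' <;> omega
    refine ⟨hneg, fun N hN => ?_⟩
    rcases lt_or_ge (-vm) N with hN' | hN'
    · rw [Icc_eq_empty (by omega), sum_empty]
    · rw [sum_Icc_add_eq_sub hM i (by omega), show i + (-vm - 1) + 1 = i - vm by ring]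
      have := h (i + N) (by rw [mem_Icc]; omega)
      omega

lemma glider_eq_one_iff (hv : vm ≤ vp) (i : ℤ) :
    glider vm vp a i = 1 ↔ ∀ m ∈ Icc (i - vp + 1) (i - vm + 1), M (i - vp) < M m := by
  rw [← glider_plus_rule_iff ha hM hv, glider]
  split_ifs with hplus
  · exact iff_of_true rfl hplus
  all_goals exact iff_of_false (by norm_num) hplus

lemma glider_eq_neg_one_iff (hv : vm ≤ vp) (i : ℤ) :
    glider vm vp a i = -1 ↔ ∀ m ∈ Icc (i - vp) (i - vm), M (i - vm + 1) < M m := by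
  rw [← glider_minus_rule_iff ha hM hv, glider]
  split_ifs with hplus hminus
  · -- the two rules compare `M (i - vp)` and `M (i - vm + 1)` in opposite directions
    refine iff_of_false (by norm_num) fun hminus => ?_
    have h₁ := (glider_plus_rule_iff ha hM hv i).1 hplus (i - vm + 1) (by rw [mem_Icc]; omega)
    have h₂ := (glider_minus_rule_iff ha hM hv i).1 hminus (i - vp) (by rw [mem_Icc]; omega)
    omega
  · exact iff_of_true rfl hminus
  · exact iff_of_false (by norm_num) hminus

lemma windowMin_succ_eq_add_glider (hv : vm ≤ vp) (i : ℤ) :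
    windowMin M (i + 1 - vp) (i + 1 - vm) =
      windowMin M (i - vp) (i - vm) + glider vm vp a i := by
  have hwin : i - vp ≤ i - vm := by omega
  rw [show i + 1 - vp = i - vp + 1 by ring, show i + 1 - vm = i - vm + 1 by ring]
  have hbound := abs_le.1 <| abs_windowMin_succ_sub_le M
    (fun m => by rw [hM, add_sub_cancel_left, abs_le]; rcases ha m with h | h | h <;> omega) hwin
  have hrise := (glider_eq_one_iff ha hM hv i).trans (windowMin_lt_succ_iff M hwin).symm
  have hdrop := (glider_eq_neg_one_iff ha hM hv i).trans (windowMin_succ_lt_iff M hwin).symm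
  rcases glider_values vm vp a i with h | h | h
  · have := hdrop.1 h
    omega
  · have := mt hrise.2 (by omega)
    have := mt hdrop.2 (by omega)
    omega
  · have := hrise.1 h
    omega

lemma windowMin_succ_eq_add_iterate_glider (hv : vm ≤ vp) (k : ℕ) (i : ℤ) :
    windowMin M (i + 1 - vp * k) (i + 1 - vm * k) =
      windowMin M (i - vp * k) (i - vm * k) + (glider vm vp)^[k] a i := by
  induction k generalizing i with
  | zero => simp [windowMin_self, hM]
  | succ k ih =>
    have hk : vm * k ≤ vp * k := mul_le_mul_of_nonneg_right hv k.cast_nonneg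
    rw [Nat.cast_succ, mul_add_one, mul_add_one, ← windowMin_windowMin M hk hv,
      ← windowMin_windowMin M hk hv, Function.iterate_succ_apply']
    exact windowMin_succ_eq_add_glider (iterate_glider_values ha k) ih hv i

end Glider

theorem stmt3_general (vm vp : ℤ) (hvm : vm < 0) (hvp : 0 ≤ vp)
    (a : ℤ → ℤ) (ha : ∀ k, a k = -1 ∨ a k = 0 ∨ a k = 1)
    (M : ℤ → ℤ) (hM : ∀ k, M (k + 1) = M k + a k)
    (j : ℤ) (k : ℕ) :
    (glider vm vp)^[k] a j = -1 ↔
      ∀ i ∈ Finset.Icc (j - vp * k) (j - vm * k), M (j - vm * k + 1) < M i := by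
  have hv : vm ≤ vp := by omega
  have hwin : j - vp * k ≤ j - vm * k := by
    linarith [mul_le_mul_of_nonneg_right hv k.cast_nonneg]
  rw [eq_neg_one_iff_succ_lt (M := fun i => windowMin M (i - vp * k) (i - vm * k))
      (iterate_glider_values ha k) (windowMin_succ_eq_add_iterate_glider ha hM hv k),
    add_sub_right_comm, add_sub_right_comm j 1]
  exact windowMin_succ_lt_iff M hwin

theorem stmt3 (vm vp : ℤ) (hvm : vm < 0) (hvp : 0 ≤ vp)
    (a : ℤ → ℤ) (ha : ∀ k, a k = -1 ∨ a k = 0 ∨ a k = 1)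
    (M : ℤ → ℤ) (hM0 : M 0 = 0) (hM : ∀ k, M (k + 1) = M k + a k)
    (j : ℤ) (k : ℕ) :
    (glider vm vp)^[k] a j = -1 ↔
      ∀ i ∈ Finset.Icc (j - vp * k) (j - vm * k), M (j - vm * k + 1) < M i :=
  stmt3_general vm vp hvm hvp a ha M hM j k
end

section
/- Let f : {0,1}³ → {0,1} be the traffic automaton rule (rule 184): f(u₋₁,u₀,u₁) = 1 if (u₋₁ = 1 and u₀ = 0) or (u₀ = 1 and u₁ = 1), and 0 otherwise. Let F be the cellular automaton on {0,1}^ℤ defined by F(a)_z = f(a_{z−1}, a_z, a_{z+1}). Let π : {0,1}^ℤ → {−1,0,+1}^ℤ be the sliding block code with π(a)_k = +1 if a_k = a_{k+1} = 0, π(a)_k = −1 if a_k = a_{k+1} = 1, and π(a)_k = 0 if a_k ≠ a_{k+1}. Then π ∘ F = G ∘ π, where G is the (−1,1)-gliders automaton. -/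
open scoped Classical

/-- The traffic automaton (Wolfram rule 184) on {0,1}^ℤ. -/
def traffic (a : ℤ → ℤ) : ℤ → ℤ := fun z =>
  if (a (z - 1) = 1 ∧ a z = 0) ∨ (a z = 1 ∧ a (z + 1) = 1) then 1 else 0

/-- The factor map onto the gliders automaton. -/
def trafficPi (a : ℤ → ℤ) : ℤ → ℤ := fun k =>
  if a k = 0 ∧ a (k + 1) = 0 then 1
  else if a k = 1 ∧ a (k + 1) = 1 then -1
  else 0

/-!
Both sides at cell `j` only see `a (j - 1), …, a (j + 2)`. For speeds `v₋ = -1`, `v₊ = 1` the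
partial-sum conditions of the gliders rule range over all `N` but only the sums of length one and
two are non-empty, so the identity becomes a check of the 16 binary patterns of that window.
-/

open Finset

lemma forall_le_add_one_sum_Icc_nonneg_iff (f : ℤ → ℤ) (m : ℤ) :
    (∀ N ≤ m + 1, 0 ≤ ∑ t ∈ Icc m N, f t) ↔ 0 ≤ f m ∧ 0 ≤ f m + f (m + 1) := by
  refine ⟨fun h => ⟨by simpa using h m (by omega), ?_⟩, fun ⟨h₀, h₁⟩ N hN => ?_⟩
  · simpa [Int.Icc_eq_pair, sum_pair] using h (m + 1) le_rfl
  · obtain hN | rfl | rfl : N < m ∨ N = m ∨ N = m + 1 := by omega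
    · simp [Icc_eq_empty_of_lt hN]
    · simpa using h₀
    · simpa [Int.Icc_eq_pair, sum_pair] using h₁

lemma forall_sub_one_le_sum_Icc_nonpos_iff (f : ℤ → ℤ) (m : ℤ) :
    (∀ N, m - 1 ≤ N → ∑ t ∈ Icc N m, f t ≤ 0) ↔ f m ≤ 0 ∧ f (m - 1) + f m ≤ 0 := by
  have hIcc : Icc (m - 1) m = {m - 1, m} := by
    simpa using Int.Icc_eq_pair (a := m - 1)
  refine ⟨fun h => ⟨by simpa using h m (by omega), ?_⟩, fun ⟨h₀, h₁⟩ N hN => ?_⟩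
  · simpa [hIcc, sum_pair] using h (m - 1) le_rfl
  · obtain hN | rfl | rfl : m < N ∨ N = m ∨ N = m - 1 := by omega
    · simp [Icc_eq_empty_of_lt hN]
    · simpa using h₀
    · simpa [hIcc, sum_pair] using h₁

lemma glider_neg_one_one_apply (b : ℤ → ℤ) (j : ℤ) :
    glider (-1) 1 b j =
      if b (j - 1) = 1 ∧ 0 ≤ b j ∧ 0 ≤ b j + b (j + 1) then 1
      else if b (j + 1) = -1 ∧ b j ≤ 0 ∧ b (j - 1) + b j ≤ 0 then -1
      else 0 := by
  have hR := forall_le_add_one_sum_Icc_nonneg_iff (fun t => b (j + t)) 0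
  have hL := forall_sub_one_le_sum_Icc_nonpos_iff (fun t => b (j + t)) 0
  simp only [zero_add, add_zero, zero_sub, ← sub_eq_add_neg] at hR hL
  simp only [glider, neg_neg, neg_add_cancel, sub_neg_eq_add, sub_self, hR, hL]

theorem stmt11 (a : ℤ → ℤ) (ha : ∀ k, a k = 0 ∨ a k = 1) :
    trafficPi (traffic a) = glider (-1) 1 (trafficPi a) := by
  funext j
  have hj : j + 1 + 1 = j + 2 := by ring
  rw [glider_neg_one_one_apply]
  rcases ha (j - 1) with h₁ | h₁ <;> rcases ha j with h₂ | h₂ <;>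
    rcases ha (j + 1) with h₃ | h₃ <;> rcases ha (j + 2) with h₄ | h₄ <;>
    simp [trafficPi, traffic, hj, h₁, h₂, h₃, h₄]
end
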